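/- arXiv:math/0603083 — 9 statements merged into one kernel-verified Lean document; each statement's English description precedes it below -/
import Mathlib

section
/- Let p, n ≥ 1 be integers and consider the (p+n)×(p+n) real block matrix B = [[n·I_p, J_{p,n}],[J_{n,p}, p·I_n]]. Let G = [[(1/n)·I_p, 0],[−(1/(np))·J_{n,p}, (1/p)·I_n]]. Then G is a generalized inverse of B, i.e. B·G·B = B. -/
open Matrix

namespace Matrix

theorem of_const_mul_of_const {l m o α : Type*} [Fintype m] [NonUnitalNonAssocSemiring α]
    (a b : α) :
    (of fun (_ : l) (_ : m) => a) * (of fun (_ : m) (_ : o) => b) =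
      of fun _ _ => Fintype.card m • (a * b) := by
  ext
  simp [mul_apply]

end Matrix

/-- `G` is a generalized inverse of the block matrix
`B = [[n·I_p, J_{p,n}], [J_{n,p}, p·I_n]]`, i.e. `B * G * B = B`. -/
theorem g_inverse_of_block_matrix (p n : ℕ) (hp : 1 ≤ p) (hn : 1 ≤ n)
    (B G : Matrix (Fin p ⊕ Fin n) (Fin p ⊕ Fin n) ℝ)
    (hB : B = Matrix.fromBlocks
      ((n : ℝ) • (1 : Matrix (Fin p) (Fin p) ℝ))
      (Matrix.of fun _ _ => (1 : ℝ))
      (Matrix.of fun _ _ => (1 : ℝ))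
      ((p : ℝ) • (1 : Matrix (Fin n) (Fin n) ℝ)))
    (hG : G = Matrix.fromBlocks
      (((n : ℝ))⁻¹ • (1 : Matrix (Fin p) (Fin p) ℝ))
      (0 : Matrix (Fin p) (Fin n) ℝ)
      (Matrix.of fun _ _ => (-(1 / ((n : ℝ) * p))))
      (((p : ℝ))⁻¹ • (1 : Matrix (Fin n) (Fin n) ℝ))) :
    B * G * B = B := by
  have hBG : B * G =
      fromBlocks (1 - of fun _ _ => (p : ℝ)⁻¹) (of fun _ _ => (p : ℝ)⁻¹) 0 1 := by
    have hn0 : (n : ℝ) ≠ 0 := by positivity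
    have hp0 : (p : ℝ) ≠ 0 := by positivity
    rw [hB, hG, fromBlocks_multiply]
    congr 1 <;> ext <;> simp [of_const_mul_of_const, smul_of, one_apply] <;> field_simp <;> ring
  rw [hBG, hB, fromBlocks_multiply]
  congr 1 <;> ext <;>
    simp [Matrix.sub_mul, of_const_mul_of_const, smul_of, one_apply, mul_sub, mul_ite]
end

section
/- Let p, v, t be integers with 2 ≤ p ≤ v, v ≥ 3 and t ≥ 1, and let β, l be real numbers satisfying β ≥ pvt, l ≥ vt, β − l ≥ vt(p−1), and β − 2l ≥ vt(p−2). Set D = pvt(p−1) − (β − 2l) − t(v+p−1) and assume D > 0. Then (vt(p−1)/(v−1))·(1 − v/(p(pv−v−1))) ≥ (1/(p(v−1)))·(p²vt − β − (β−l)²/D). -/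
/-- The scalar comparison `C*₁₁.₂₂ ≥ C̄₁₁.₂₂` of `H`-coefficients of the
information matrices for direct effects eliminating residual effects. -/
theorem direct_effects_coefficient_comparison
    (p v t : ℤ) (hp : 2 ≤ p) (hpv : p ≤ v) (hv : 3 ≤ v) (ht : 1 ≤ t)
    (β l : ℝ)
    (hβ : β ≥ (p : ℝ) * v * t)
    (hl : l ≥ (v : ℝ) * t)
    (hβl : β - l ≥ (v : ℝ) * t * (p - 1))
    (hβ2l : β - 2 * l ≥ (v : ℝ) * t * (p - 2))
    (D : ℝ)
    (hD : D = (p : ℝ) * v * t * (p - 1) - (β - 2 * l) - t * (v + p - 1))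
    (hDpos : D > 0) :
    ((v : ℝ) * t * (p - 1) / (v - 1)) * (1 - v / (p * (p * v - v - 1))) ≥
      (1 / ((p : ℝ) * (v - 1))) * (p ^ 2 * v * t - β - (β - l) ^ 2 / D) := by
  have hp' : (2 : ℝ) ≤ (p : ℝ) := by exact_mod_cast hp
  have hv' : (3 : ℝ) ≤ (v : ℝ) := by exact_mod_cast hv
  have ht' : (1 : ℝ) ≤ (t : ℝ) := by exact_mod_cast ht
  have hpv' : (p : ℝ) ≤ (v : ℝ) := by exact_mod_cast hpv
  set P : ℝ := (p : ℝ)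
  set V : ℝ := (v : ℝ)
  set T : ℝ := (t : ℝ)
  have hQ : (0 : ℝ) < P * V - V - 1 := by nlinarith
  have hv1 : (0 : ℝ) < V - 1 := by linarith
  have hPpos : (0 : ℝ) < P := by linarith
  have hvt : (0 : ℝ) < V * T * (P - 1) := by nlinarith
  -- D ≤ T*(P-1)*(P*V-V-1)
  have hDle : D ≤ T * (P - 1) * (P * V - V - 1) := by
    have : P * V * T * (P - 1) - V * T * (P - 2) - T * (V + P - 1)
        = T * (P - 1) * (P * V - V - 1) := by ring
    nlinarith [hβ2l]
  have hden : (0 : ℝ) < T * (P - 1) * (P * V - V - 1) := by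
    nlinarith
  have hnum : (V * T * (P - 1)) ^ 2 ≤ (β - l) ^ 2 := by
    nlinarith [hβl, hvt]
  have hkey : (V * T * (P - 1)) ^ 2 / (T * (P - 1) * (P * V - V - 1)) ≤ (β - l) ^ 2 / D :=
    div_le_div₀ (sq_nonneg _) hnum hDpos hDle
  have heq : (V * T * (P - 1)) ^ 2 / (T * (P - 1) * (P * V - V - 1))
      = V ^ 2 * T * (P - 1) / (P * V - V - 1) := by
    field_simp
  rw [heq] at hkey
  have hEQ : V ^ 2 * T * (P - 1) ≤ (β - l) ^ 2 / D * (P * V - V - 1) := by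
    have := (div_le_iff₀ hQ).mp hkey
    linarith
  set E : ℝ := (β - l) ^ 2 / D with hE
  have hMpos : (0 : ℝ) < P * (V - 1) * (P * V - V - 1) :=
    mul_pos (mul_pos hPpos hv1) hQ
  rw [ge_iff_le, ← sub_nonneg]
  have hfact : V * T * (P - 1) / (V - 1) * (1 - V / (P * (P * V - V - 1)))
      - 1 / (P * (V - 1)) * (P ^ 2 * V * T - β - E)
      = (V * T * (P - 1) * (P * (P * V - V - 1)) - V * T * (P - 1) * V
          - (P * V - V - 1) * (P ^ 2 * V * T - β - E))
        / (P * (V - 1) * (P * V - V - 1)) := by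
    have hv1ne := hv1.ne'
    have hPne := hPpos.ne'
    generalize P * V - V - 1 = Q at hQ ⊢
    have hQne := hQ.ne'
    field_simp
  rw [hfact]
  apply div_nonneg _ hMpos.le
  nlinarith [hEQ, mul_nonneg hQ.le (sub_nonneg.mpr hβ)]
end

section
/- Let p, v, t be integers with 2 ≤ p ≤ v, v ≥ 3 and t ≥ 1, and let β, l be real numbers satisfying β ≥ pvt, l ≥ vt, β − l ≥ vt(p−1), β − 2l ≥ vt(p−2), and p²vt − β > 0. Then t(p−1)(pv−v−1)/(p(v−1)) − vt(p−1)/(p²(v−1)) ≥ (pvt(p−1) − (β−2l) − t(v+p−1))/(p(v−1)) − (β−l)²/(p(v−1)(p²vt − β)). -/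
/-- The scalar comparison `C*₂₂.₁₁ ≥ C̄₂₂.₁₁` of `H`-coefficients of the
information matrices for residual effects eliminating direct effects. -/
theorem residual_effects_coefficient_comparison
    (p v t : ℤ) (hp : 2 ≤ p) (hpv : p ≤ v) (hv : 3 ≤ v) (ht : 1 ≤ t)
    (β l : ℝ)
    (hβ : β ≥ (p : ℝ) * v * t)
    (hl : l ≥ (v : ℝ) * t)
    (hβl : β - l ≥ (v : ℝ) * t * (p - 1))
    (hβ2l : β - 2 * l ≥ (v : ℝ) * t * (p - 2))
    (hpos : (p : ℝ) ^ 2 * v * t - β > 0) :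
    (t : ℝ) * (p - 1) * (p * v - v - 1) / (p * (v - 1))
      - (v : ℝ) * t * (p - 1) / (p ^ 2 * (v - 1)) ≥
    ((p : ℝ) * v * t * (p - 1) - (β - 2 * l) - t * (v + p - 1)) / (p * (v - 1))
      - (β - l) ^ 2 / ((p : ℝ) * (v - 1) * (p ^ 2 * v * t - β)) := by
  have hp0 : (0:ℝ) < (p:ℝ) := by exact_mod_cast (by omega : (0:ℤ) < p)
  have hv1 : (0:ℝ) < (v:ℝ) - 1 := by
    have : (1:ℝ) < (v:ℝ) := by exact_mod_cast (by omega : (1:ℤ) < v)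
    linarith
  have ht0 : (0:ℝ) < (t:ℝ) := by exact_mod_cast (by omega : (0:ℤ) < t)
  have hv0 : (0:ℝ) < (v:ℝ) := by linarith
  have hpm1 : (1:ℝ) ≤ (p:ℝ) - 1 := by
    have : (2:ℝ) ≤ (p:ℝ) := by exact_mod_cast hp
    linarith
  have hβlpos : (0:ℝ) < β - l := by nlinarith
  have key : (β - l) ^ 2 ≥ ((p:ℝ) ^ 2 * v * t - β) * ((v:ℝ) * t * (p - 1)) / p := by
    have h0 : (0:ℝ) ≤ (v:ℝ) * t * (p - 1) := by positivity
    have h1 : (β - l) ^ 2 ≥ ((v:ℝ) * t * (p - 1)) ^ 2 :=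
      pow_le_pow_left₀ h0 hβl 2
    have h2 : ((p:ℝ) ^ 2 * v * t - β) * ((v:ℝ) * t * (p - 1)) / p
        ≤ ((v:ℝ) * t * (p - 1)) ^ 2 := by
      rw [div_le_iff₀ hp0]
      nlinarith
    linarith
  rw [ge_iff_le, ← sub_nonneg]
  have hD : (0:ℝ) < (p:ℝ) ^ 2 * v * t - β := hpos
  have e : (t : ℝ) * (p - 1) * (p * v - v - 1) / (p * (v - 1))
      - (v : ℝ) * t * (p - 1) / (p ^ 2 * (v - 1))
      - (((p : ℝ) * v * t * (p - 1) - (β - 2 * l) - t * (v + p - 1)) / (p * (v - 1))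
        - (β - l) ^ 2 / ((p : ℝ) * (v - 1) * (p ^ 2 * v * t - β)))
      = ((p : ℝ) * ((β - l)^2 - ((p:ℝ) ^ 2 * v * t - β) * ((v:ℝ) * t * (p - 1)) / p)
          + (p:ℝ) * ((β - 2*l) - v*t*(p-2)) * ((p:ℝ) ^ 2 * v * t - β))
        / ((p:ℝ)^2 * (v - 1) * ((p:ℝ) ^ 2 * v * t - β)) := by
    have hDne : (t:ℝ) * p ^ 2 * v - β ≠ 0 := by nlinarith
    have hv1ne : (v:ℝ) - 1 ≠ 0 := ne_of_gt hv1
    field_simp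
    ring
  rw [e]
  apply div_nonneg
  · have h3 : (0:ℝ) ≤ (β - 2*l) - v*t*(p-2) := by linarith
    have h4 : (0:ℝ) ≤ (β - l)^2 - ((p:ℝ) ^ 2 * v * t - β) * ((v:ℝ) * t * (p - 1)) / p := by
      linarith
    positivity
  · positivity
end

section
/- Let v ≥ 3 be an integer, let a, b, c, e be real numbers, and let C be the 2v×2v real block matrix C = [[a·H, b·H],[b·H, c·H + e·J_v]], where H = I_v − (1/v)J_v. If C is positive semidefinite and rank(C) ≥ 2(v−1), then ac − b² > 0. -/
open Matrix Module

lemma aux_rank_add_le {m n : Type*} [Fintype m] [Fintype n] [DecidableEq n]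
    (A B : Matrix m n ℝ) : (A + B).rank ≤ A.rank + B.rank := by
  rw [Matrix.rank, Matrix.rank, Matrix.rank, Matrix.mulVecLin_add]
  have hle : LinearMap.range (A.mulVecLin + B.mulVecLin) ≤
      LinearMap.range A.mulVecLin ⊔ LinearMap.range B.mulVecLin := by
    rintro x ⟨y, rfl⟩
    exact Submodule.add_mem_sup (LinearMap.mem_range_self _ y) (LinearMap.mem_range_self _ y)
  refine le_trans (Submodule.finrank_mono hle) ?_
  have := Submodule.finrank_sup_add_finrank_inf_eq (LinearMap.range A.mulVecLin)
    (LinearMap.range B.mulVecLin)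
  omega

lemma aux_rank_H (v : ℕ) (hv : 3 ≤ v)
    (H : Matrix (Fin v) (Fin v) ℝ)
    (hH : H = (1 : Matrix (Fin v) (Fin v) ℝ)
      - ((v : ℝ))⁻¹ • Matrix.of (fun _ _ => (1 : ℝ))) :
    H.rank ≤ v - 1 := by
  have hvne : (v : ℝ) ≠ 0 := by positivity
  have hker : H.mulVecLin (fun _ => (1 : ℝ)) = 0 := by
    rw [Matrix.mulVecLin_apply, hH, Matrix.sub_mulVec, Matrix.one_mulVec,
      Matrix.smul_mulVec]
    funext i
    simp [Matrix.mulVec, dotProduct]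
    field_simp
    norm_num
  have h1 : H.rank + finrank ℝ (LinearMap.ker H.mulVecLin) = v := by
    have h := LinearMap.finrank_range_add_finrank_ker H.mulVecLin
    rw [Matrix.rank]
    simpa using h
  have h2 : 0 < finrank ℝ (LinearMap.ker H.mulVecLin) := by
    rw [Module.finrank_pos_iff]
    refine ⟨⟨⟨fun _ => (1:ℝ), hker⟩, 0, fun hcon => ?_⟩⟩
    have h3 := congrArg (fun z : LinearMap.ker H.mulVecLin => (z : Fin v → ℝ) ⟨0, by omega⟩) hcon
    simp at h3
  omega

lemma aux_decomp (v : ℕ) (p q e : ℝ)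
    (H : Matrix (Fin v) (Fin v) ℝ) :
    Matrix.fromBlocks ((p*p) • H) ((p*q) • H) ((p*q) • H)
      ((q*q) • H + e • Matrix.of (fun _ _ => (1 : ℝ)))
    = Matrix.fromRows (p • (1 : Matrix (Fin v) (Fin v) ℝ)) (q • 1)
        * (H * Matrix.fromCols (p • (1 : Matrix (Fin v) (Fin v) ℝ)) (q • 1))
      + Matrix.of (fun (i : Fin v ⊕ Fin v) (_ : Fin 1) => Sum.elim (fun _ => (0:ℝ)) (fun _ => e) i)
        * Matrix.of (fun (_ : Fin 1) (j : Fin v ⊕ Fin v) => Sum.elim (fun _ => (0:ℝ)) (fun _ => (1:ℝ)) j) := by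
  rw [Matrix.mul_fromCols, Matrix.fromRows_mul_fromCols]
  have hXY : (Matrix.of (fun (i : Fin v ⊕ Fin v) (_ : Fin 1) => Sum.elim (fun _ => (0:ℝ)) (fun _ => e) i)
        * Matrix.of (fun (_ : Fin 1) (j : Fin v ⊕ Fin v) => Sum.elim (fun _ => (0:ℝ)) (fun _ => (1:ℝ)) j))
      = Matrix.fromBlocks 0 0 0 (e • Matrix.of (fun _ _ => (1:ℝ))) := by
    ext i j
    cases i <;> cases j <;> simp [Matrix.mul_apply, Matrix.fromBlocks]
  rw [hXY, Matrix.fromBlocks_add]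
  simp [Matrix.smul_mul, Matrix.mul_smul, smul_smul, mul_comm]

/-- If the block matrix `C = [[aH, bH], [bH, cH + eJ]]` is positive
semidefinite of rank at least `2(v-1)`, then `ac - b² > 0`. -/
theorem block_information_matrix_det_pos
    (v : ℕ) (hv : 3 ≤ v) (a b c e : ℝ)
    (H : Matrix (Fin v) (Fin v) ℝ)
    (hH : H = (1 : Matrix (Fin v) (Fin v) ℝ)
      - ((v : ℝ))⁻¹ • Matrix.of (fun _ _ => (1 : ℝ)))
    (C : Matrix (Fin v ⊕ Fin v) (Fin v ⊕ Fin v) ℝ)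
    (hC : C = Matrix.fromBlocks (a • H) (b • H) (b • H)
      (c • H + e • Matrix.of (fun _ _ => (1 : ℝ))))
    (hpsd : C.PosSemidef)
    (hrank : 2 * (v - 1) ≤ C.rank) :
    a * c - b ^ 2 > 0 := by
  -- Step 1: the quadratic form `a s² + 2 b s t + c t²` is nonnegative.
  have hquad : ∀ s t : ℝ, 0 ≤ a*s*s + 2*b*s*t + c*t*t := by
    obtain ⟨n, hn⟩ : ∃ n, v = n + 3 := ⟨v - 3, by omega⟩
    subst hn
    set u : Fin (n+3) → ℝ := Pi.single (0 : Fin (n+3)) 1 - Pi.single 1 1 with hu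
    have h01 : (0 : Fin (n + 3)) ≠ 1 := by
      simp [Fin.ext_iff]
    have hsum : ∑ j, u j = 0 := by
      simp [hu, Finset.sum_sub_distrib]
    have hJu : (Matrix.of (fun _ _ => (1:ℝ)) : Matrix (Fin (n+3)) (Fin (n+3)) ℝ).mulVec u = 0 := by
      funext i
      simp [Matrix.mulVec, dotProduct, hsum]
    have hHu : H.mulVec u = u := by
      rw [hH, Matrix.sub_mulVec, Matrix.one_mulVec, Matrix.smul_mulVec, hJu]
      simp
    have huu : u ⬝ᵥ u = 2 := by
      simp [hu, sub_dotProduct, dotProduct_sub,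
        single_dotProduct, Pi.single_apply, h01, h01.symm]
      norm_num
    intro s t
    have hq := hpsd.dotProduct_mulVec_nonneg (Sum.elim (s • u) (t • u))
    rw [hC, Matrix.fromBlocks_mulVec] at hq
    simp only [Sum.elim_comp_inl, Sum.elim_comp_inr,
      Matrix.add_mulVec, Matrix.smul_mulVec, Matrix.mulVec_smul, hHu, hJu,
      star_trivial, sumElim_dotProduct_sumElim, smul_smul, smul_zero, add_zero,
      dotProduct_add, dotProduct_smul, smul_dotProduct, huu] at hq
    simp only [smul_eq_mul] at hq
    nlinarith [hq]
  have ha : 0 ≤ a := by have := hquad 1 0; linarith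
  have hc : 0 ≤ c := by have := hquad 0 1; linarith
  have hdisc : b ^ 2 ≤ a * c := by
    have h := discrim_le_zero (a := a) (b := 2*b) (c := c) (fun x => by have := hquad x 1; linarith)
    rw [discrim] at h
    nlinarith
  -- Step 2: if `ac = b²`, the rank would be too small.
  by_contra hcon
  push_neg at hcon
  have heq : b ^ 2 = a * c := by nlinarith
  set p : ℝ := Real.sqrt a with hp
  set q : ℝ := if 0 ≤ b then Real.sqrt c else -Real.sqrt c with hqdef
  have hpp : p * p = a := Real.mul_self_sqrt ha
  have hqq : q * q = c := by
    rcases le_or_gt 0 b with hb | hb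
    · simp only [hqdef, if_pos hb]
      exact Real.mul_self_sqrt hc
    · simp only [hqdef, if_neg (not_le.mpr hb)]
      rw [neg_mul_neg]
      exact Real.mul_self_sqrt hc
  have hpq : p * q = b := by
    rcases le_or_gt 0 b with hb | hb
    · simp only [hqdef, if_pos hb, hp]
      rw [← Real.sqrt_mul ha, ← heq, Real.sqrt_sq hb]
    · simp only [hqdef, if_neg (not_le.mpr hb), hp, mul_neg]
      rw [← Real.sqrt_mul ha, ← heq, Real.sqrt_sq_eq_abs, abs_of_neg hb, neg_neg]
  have hCd : C = Matrix.fromBlocks ((p*p) • H) ((p*q) • H) ((p*q) • H)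
      ((q*q) • H + e • Matrix.of (fun _ _ => (1 : ℝ))) := by
    rw [hC, hpp, hqq, hpq]
  have hrank_le : C.rank ≤ v := by
    rw [hCd, aux_decomp]
    refine le_trans (aux_rank_add_le _ _) ?_
    have hA : (Matrix.fromRows (p • (1 : Matrix (Fin v) (Fin v) ℝ)) (q • 1)
        * (H * Matrix.fromCols (p • (1 : Matrix (Fin v) (Fin v) ℝ)) (q • 1))).rank ≤ H.rank :=
      le_trans
        (Matrix.rank_mul_le_right (Matrix.fromRows (p • (1 : Matrix (Fin v) (Fin v) ℝ)) (q • (1 : Matrix (Fin v) (Fin v) ℝ)))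
          (H * Matrix.fromCols (p • (1 : Matrix (Fin v) (Fin v) ℝ)) (q • (1 : Matrix (Fin v) (Fin v) ℝ))))
        (Matrix.rank_mul_le_left H (Matrix.fromCols (p • (1 : Matrix (Fin v) (Fin v) ℝ)) (q • (1 : Matrix (Fin v) (Fin v) ℝ))))
    have hB : ((Matrix.of (fun (i : Fin v ⊕ Fin v) (_ : Fin 1) => Sum.elim (fun _ => (0:ℝ)) (fun _ => e) i))
        * Matrix.of (fun (_ : Fin 1) (j : Fin v ⊕ Fin v) => Sum.elim (fun _ => (0:ℝ)) (fun _ => (1:ℝ)) j)).rank ≤ 1 := by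
      refine le_trans (Matrix.rank_mul_le_left _ _) ?_
      simpa using Matrix.rank_le_card_width
        (Matrix.of (fun (i : Fin v ⊕ Fin v) (_ : Fin 1) => Sum.elim (fun _ => (0:ℝ)) (fun _ => e) i))
    have hHr : H.rank ≤ v - 1 := aux_rank_H v hv H hH
    have := add_le_add hA hB
    omega
  omega
end

section
/- Let v ≥ 2 be an integer, let H = I_v − (1/v)J_v, let a, b, c, e, α be real numbers satisfying b·α² + (a−c)·α − b = 0, and let u ∈ ℝ^v be a vector whose coordinates sum to 0. Then the vector w = (u, α·u) ∈ ℝ^{2v} satisfies C·w = (a + αb)·w, where C is the 2v×2v block matrix C = [[a·H, b·H],[b·H, c·H + e·J_v]]. In particular, if u ≠ 0, then w is an eigenvector of C with eigenvalue a + αb. -/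
/-!
On vectors summing to zero the all-ones matrix `J` acts as `0` and the centering matrix
`H = I - J / v` as the identity, so `C (u, αu) = ((a + αb) u, (b + αc) u)`. The quadratic
relation `bα² + (a - c)α - b = 0` says exactly that `b + αc = α (a + αb)`.
-/

open Matrix

namespace Matrix

variable {m n R : Type*} [Fintype n]

theorem of_const_one_mulVec [NonAssocSemiring R] (u : n → R) :
    (of fun (_ : m) (_ : n) => (1 : R)) *ᵥ u = fun _ => ∑ i, u i := by
  ext
  simp [mulVec, dotProduct]

theorem of_const_one_mulVec_eq_zero [NonAssocSemiring R] {u : n → R} (hu : ∑ i, u i = 0) :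
    (of fun (_ : m) (_ : n) => (1 : R)) *ᵥ u = 0 := by
  rw [of_const_one_mulVec, hu]
  rfl

theorem centering_mulVec_eq_self [DecidableEq n] [CommRing R] (r : R) {u : n → R}
    (hu : ∑ i, u i = 0) : (1 - r • of fun (_ : n) (_ : n) => (1 : R)) *ᵥ u = u := by
  rw [sub_mulVec, smul_mulVec, of_const_one_mulVec_eq_zero hu, smul_zero, sub_zero, one_mulVec]

theorem fromBlocks_mulVec_sumElim_smul [CommRing R] {H J : Matrix n n R} {u : n → R}
    (hHu : H *ᵥ u = u) (hJu : J *ᵥ u = 0) {a b c e α : R}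
    (hα : b * α ^ 2 + (a - c) * α - b = 0) :
    fromBlocks (a • H) (b • H) (b • H) (c • H + e • J) *ᵥ Sum.elim u (α • u) =
      (a + α * b) • Sum.elim u (α • u) := by
  rw [fromBlocks_mulVec, Sum.elim_comp_inl, Sum.elim_comp_inr]
  ext (i | i) <;>
    simp only [Sum.elim_inl, Sum.elim_inr, add_mulVec, smul_mulVec, mulVec_smul, hHu, hJu,
      smul_zero, add_zero, Pi.add_apply, Pi.smul_apply, smul_eq_mul]
  · ring
  · linear_combination (-u i) * hα

theorem hasEigenvector_mulVecLin [CommRing R] {M : Matrix n n R} {μ : R} {w : n → R}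
    (hM : M *ᵥ w = μ • w) (hw : w ≠ 0) : Module.End.HasEigenvector M.mulVecLin μ w :=
  ⟨Module.End.mem_eigenspace_iff.mpr hM, hw⟩

end Matrix

theorem Sum.elim_ne_zero_of_left {α β γ : Type*} [Zero γ] {f : α → γ} (g : β → γ) (hf : f ≠ 0) :
    Sum.elim f g ≠ 0 := fun h => hf (by simpa using congrArg (· ∘ Sum.inl) h)

theorem block_information_matrix_eigenvector_general
    (v : ℕ) (a b c e α : ℝ)
    (hα : b * α ^ 2 + (a - c) * α - b = 0)
    (H : Matrix (Fin v) (Fin v) ℝ)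
    (hH : H = (1 : Matrix (Fin v) (Fin v) ℝ)
      - ((v : ℝ))⁻¹ • Matrix.of (fun _ _ => (1 : ℝ)))
    (C : Matrix (Fin v ⊕ Fin v) (Fin v ⊕ Fin v) ℝ)
    (hC : C = Matrix.fromBlocks (a • H) (b • H) (b • H)
      (c • H + e • Matrix.of (fun _ _ => (1 : ℝ))))
    (u : Fin v → ℝ) (hu : ∑ i, u i = 0)
    (w : Fin v ⊕ Fin v → ℝ) (hw : w = Sum.elim u (α • u)) :
    C.mulVec w = (a + α * b) • w ∧
      (u ≠ 0 → Module.End.HasEigenvector C.mulVecLin (a + α * b) w) := by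
  have hHu : H *ᵥ u = u := hH ▸ centering_mulVec_eq_self _ hu
  have hCw : C *ᵥ w = (a + α * b) • w := by
    subst hC hw
    exact fromBlocks_mulVec_sumElim_smul hHu (of_const_one_mulVec_eq_zero hu) hα
  exact ⟨hCw, fun hu0 => hasEigenvector_mulVecLin hCw (hw ▸ Sum.elim_ne_zero_of_left _ hu0)⟩

/-- If `u` sums to zero and `α` satisfies `bα² + (a-c)α - b = 0`, then
`w = (u, αu)` satisfies `C w = (a + αb) w` for the block matrix
`C = [[aH, bH], [bH, cH + eJ]]`; in particular, if `u ≠ 0` then `w` is an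
eigenvector of `C` with eigenvalue `a + αb`. -/
theorem block_information_matrix_eigenvector
    (v : ℕ) (hv : 2 ≤ v) (a b c e α : ℝ)
    (hα : b * α ^ 2 + (a - c) * α - b = 0)
    (H : Matrix (Fin v) (Fin v) ℝ)
    (hH : H = (1 : Matrix (Fin v) (Fin v) ℝ)
      - ((v : ℝ))⁻¹ • Matrix.of (fun _ _ => (1 : ℝ)))
    (C : Matrix (Fin v ⊕ Fin v) (Fin v ⊕ Fin v) ℝ)
    (hC : C = Matrix.fromBlocks (a • H) (b • H) (b • H)
      (c • H + e • Matrix.of (fun _ _ => (1 : ℝ))))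
    (u : Fin v → ℝ) (hu : ∑ i, u i = 0)
    (w : Fin v ⊕ Fin v → ℝ) (hw : w = Sum.elim u (α • u)) :
    C.mulVec w = (a + α * b) • w ∧
      (u ≠ 0 → Module.End.HasEigenvector C.mulVecLin (a + α * b) w) :=
  block_information_matrix_eigenvector_general v a b c e α hα H hH C hC u hu w hw
end

section
/- Let v ≥ 1 be an integer, let H = I_v − (1/v)J_v, and let a, b, c, e be real numbers with Δ := ac − b² ≠ 0 and e ≠ 0. Let C = [[a·H, b·H],[b·H, c·H + e·J_v]] and G = [[(c/Δ)·H, −(b/Δ)·H],[−(b/Δ)·H, (a/Δ)·H + (1/(e·v²))·J_v]]. Then G is the Moore–Penrose inverse of C, i.e. C·G·C = C, G·C·G = G, and both C·G and G·C are symmetric; indeed C·G = G·C = [[H, 0],[0, I_v]]. -/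
open Matrix

/-- `G = [[(c/Δ)H, -(b/Δ)H], [-(b/Δ)H, (a/Δ)H + (1/(ev²))J]]` is the
Moore–Penrose inverse of `C = [[aH, bH], [bH, cH + eJ]]` when
`Δ = ac - b² ≠ 0` and `e ≠ 0`; moreover `CG = GC = [[H, 0], [0, I]]`. -/
theorem block_information_matrix_moore_penrose
    (v : ℕ) (hv : 1 ≤ v) (a b c e : ℝ)
    (hΔ : a * c - b ^ 2 ≠ 0) (he : e ≠ 0)
    (H : Matrix (Fin v) (Fin v) ℝ)
    (hH : H = (1 : Matrix (Fin v) (Fin v) ℝ)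
      - ((v : ℝ))⁻¹ • Matrix.of (fun _ _ => (1 : ℝ)))
    (C G : Matrix (Fin v ⊕ Fin v) (Fin v ⊕ Fin v) ℝ)
    (hC : C = Matrix.fromBlocks (a • H) (b • H) (b • H)
      (c • H + e • Matrix.of (fun _ _ => (1 : ℝ))))
    (hG : G = Matrix.fromBlocks
      ((c / (a * c - b ^ 2)) • H)
      ((-(b / (a * c - b ^ 2))) • H)
      ((-(b / (a * c - b ^ 2))) • H)
      ((a / (a * c - b ^ 2)) • H
        + (1 / (e * (v : ℝ) ^ 2)) • Matrix.of (fun _ _ => (1 : ℝ)))) :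
    C * G * C = C ∧ G * C * G = G ∧ (C * G)ᵀ = C * G ∧ (G * C)ᵀ = G * C ∧
      C * G = Matrix.fromBlocks H 0 0 (1 : Matrix (Fin v) (Fin v) ℝ) ∧
      G * C = Matrix.fromBlocks H 0 0 (1 : Matrix (Fin v) (Fin v) ℝ) := by
  have hv0 : (v : ℝ) ≠ 0 := by positivity
  set J : Matrix (Fin v) (Fin v) ℝ := Matrix.of (fun _ _ => (1 : ℝ)) with hJ
  have hJJ : J * J = (v : ℝ) • J := by
    ext i j; simp [hJ, Matrix.mul_apply, Matrix.smul_apply]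
  have hHJ : H * J = 0 := by
    rw [hH, sub_mul, one_mul, smul_mul_assoc, hJJ, smul_smul,
      inv_mul_cancel₀ hv0, one_smul, sub_self]
  have hJH : J * H = 0 := by
    rw [hH, mul_sub, mul_one, mul_smul_comm, hJJ, smul_smul,
      inv_mul_cancel₀ hv0, one_smul, sub_self]
  have hHH : H * H = H := by
    nth_rewrite 2 [hH]
    rw [mul_sub, mul_one, mul_smul_comm, hHJ, smul_zero, sub_zero]
  set Δ := a * c - b ^ 2 with hΔ'
  have hone : (1 : Matrix (Fin v) (Fin v) ℝ) = H + ((v : ℝ))⁻¹ • J := by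
    rw [hH]; abel
  have key : ∀ x y : ℝ, (x • H) * (y • H) = (x * y) • H := by
    intro x y
    rw [smul_mul_assoc, mul_smul_comm, hHH, smul_smul]
  have hJT : Jᵀ = J := by ext i j; simp [hJ]
  have hHT : Hᵀ = H := by rw [hH]; simp [transpose_smul, hJT]
  have e1 : a • H * (c / Δ) • H + b • H * -(b / Δ) • H = H := by
    simp only [key, add_mul, mul_add, smul_mul_assoc, mul_smul_comm,
      hHH, hHJ, hJH, hJJ, smul_smul, smul_zero, add_zero, zero_add]
    match_scalars <;> (try simp only [hΔ']) <;> field_simp [show a * c - b ^ 2 ≠ 0 from hΔ] <;> ring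
  have e2 : a • H * -(b / Δ) • H
      + b • H * ((a / Δ) • H + (1 / (e * (v : ℝ) ^ 2)) • J) = 0 := by
    simp only [key, add_mul, mul_add, smul_mul_assoc, mul_smul_comm,
      hHH, hHJ, hJH, hJJ, smul_smul, smul_zero, add_zero, zero_add]
    match_scalars <;> (try simp only [hΔ']) <;> field_simp <;> ring
  have e3 : b • H * (c / Δ) • H + (c • H + e • J) * -(b / Δ) • H = 0 := by
    simp only [key, add_mul, mul_add, smul_mul_assoc, mul_smul_comm,
      hHH, hHJ, hJH, hJJ, smul_smul, smul_zero, add_zero, zero_add]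
    match_scalars <;> (try simp only [hΔ']) <;> field_simp <;> ring
  have e4 : b • H * -(b / Δ) • H
      + (c • H + e • J) * ((a / Δ) • H + (1 / (e * (v : ℝ) ^ 2)) • J) = 1 := by
    rw [hone]
    simp only [key, add_mul, mul_add, smul_mul_assoc, mul_smul_comm,
      hHH, hHJ, hJH, hJJ, smul_smul, smul_zero, add_zero, zero_add]
    match_scalars <;> (try simp only [hΔ']) <;> field_simp [show a * c - b ^ 2 ≠ 0 from hΔ] <;> ring
  have f1 : (c / Δ) • H * a • H + -(b / Δ) • H * b • H = H := by
    simp only [key, add_mul, mul_add, smul_mul_assoc, mul_smul_comm,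
      hHH, hHJ, hJH, hJJ, smul_smul, smul_zero, add_zero, zero_add]
    match_scalars <;> (try simp only [hΔ']) <;> field_simp [show c * a - b ^ 2 ≠ 0 by rw [mul_comm]; exact hΔ] <;> ring
  have f2 : (c / Δ) • H * b • H + -(b / Δ) • H * (c • H + e • J) = 0 := by
    simp only [key, add_mul, mul_add, smul_mul_assoc, mul_smul_comm,
      hHH, hHJ, hJH, hJJ, smul_smul, smul_zero, add_zero, zero_add]
    match_scalars <;> (try simp only [hΔ']) <;> field_simp <;> ring
  have f3 : -(b / Δ) • H * a • H
      + ((a / Δ) • H + (1 / (e * (v : ℝ) ^ 2)) • J) * b • H = 0 := by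
    simp only [key, add_mul, mul_add, smul_mul_assoc, mul_smul_comm,
      hHH, hHJ, hJH, hJJ, smul_smul, smul_zero, add_zero, zero_add]
    match_scalars <;> (try simp only [hΔ']) <;> field_simp <;> ring
  have f4 : -(b / Δ) • H * b • H
      + ((a / Δ) • H + (1 / (e * (v : ℝ) ^ 2)) • J) * (c • H + e • J) = 1 := by
    rw [hone]
    simp only [key, add_mul, mul_add, smul_mul_assoc, mul_smul_comm,
      hHH, hHJ, hJH, hJJ, smul_smul, smul_zero, add_zero, zero_add]
    match_scalars <;> (try simp only [hΔ']) <;> field_simp [show a * c - b ^ 2 ≠ 0 from hΔ] <;> ring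
  have hCG : C * G = Matrix.fromBlocks H 0 0 (1 : Matrix (Fin v) (Fin v) ℝ) := by
    rw [hC, hG, Matrix.fromBlocks_multiply, e1, e2, e3, e4]
  have hGC : G * C = Matrix.fromBlocks H 0 0 (1 : Matrix (Fin v) (Fin v) ℝ) := by
    rw [hG, hC, Matrix.fromBlocks_multiply, f1, f2, f3, f4]
  refine ⟨?_, ?_, ?_, ?_, hCG, hGC⟩
  · rw [hCG]
    nth_rewrite 1 [hC]
    rw [Matrix.fromBlocks_multiply]
    rw [hC]
    rw [show H * (a • H) = a • H by rw [mul_smul_comm, hHH],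
      show H * (b • H) = b • H by rw [mul_smul_comm, hHH]]
    simp
  · rw [hGC]
    nth_rewrite 1 [hG]
    rw [Matrix.fromBlocks_multiply]
    rw [hG]
    rw [show H * ((c / Δ) • H) = (c / Δ) • H by rw [mul_smul_comm, hHH],
      show H * (-(b / Δ) • H) = -(b / Δ) • H by rw [mul_smul_comm, hHH]]
    simp
  · rw [hCG, Matrix.fromBlocks_transpose, hHT]
    simp
  · rw [hGC, Matrix.fromBlocks_transpose, hHT]
    simp
end

section
/- Let v ≥ 1 be an integer and let Ω = (ω_{ij}), Δ = (δ_{ij}), Θ = (θ_{ij}) be v×v real matrices each of whose rows and columns sum to zero. For indices i, i′, j, j′ ∈ {1,…,v} set Q(i,i′,j,j′) = ω_{ii} + ω_{i′i′} − 2ω_{ii′} + δ_{jj} + δ_{j′j′} − 2δ_{jj′} + 2(θ_{ij} − θ_{ij′} − θ_{i′j} + θ_{i′j′}). Then the sum of Q(i,i′,j,j′) over all quadruples (i,i′,j,j′) with i ≠ j, i ≠ i′, i′ ≠ j′, and j ≠ j′ equals 2v·[((v−1) + (v−2)²)·(tr Ω + tr Δ) − 2(v−1)·tr Θ]. -/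
/-! The constraint `i ≠ j ∧ i ≠ i' ∧ i' ≠ j' ∧ j ≠ j'` says that consecutive entries of the
cyclic word `(i, i', j', j)` differ, so the set of admissible quadruples is invariant under the
symmetries of this 4-cycle. Up to these symmetries every term of `Q` depends only on an adjacent
pair `(i, i')` or on an opposite pair `(i, j')`. A pair `a ≠ b` extends to `(v - 1) + (v - 2)²`
admissible quadruples as an adjacent pair, and `(a, c)` extends to `(v - 1)²` or `(v - 2)²` of them
as an opposite pair, according as `a = c` or not. As each matrix has total sum zero, its
off-diagonal sum is minus its trace, and what is left is bookkeeping. -/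

open Finset

lemma sum_ite_ne {α M : Type*} [Fintype α] [DecidableEq α] [AddCommGroup M] (a : α) (f : α → M) :
    ∑ x, (if x ≠ a then f x else 0) = ∑ x, f x - f a := by
  rw [← sum_filter, filter_ne', sum_erase_eq_sub (mem_univ a)]

lemma sum_ite_ne_and_ne {α R : Type*} [Fintype α] [DecidableEq α] [NonAssocRing R] (a b : α)
    (c : R) :
    ∑ x, (if x ≠ a ∧ x ≠ b then c else 0) = (Fintype.card α - if a = b then 1 else 2) * c := by
  have h : ({x | x ≠ a ∧ x ≠ b} : Finset α) = univ \ {a, b} := by ext; simp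
  rw [← sum_filter, sum_const, nsmul_eq_mul, h, card_sdiff_of_subset (subset_univ _), card_univ,
    Nat.cast_sub (card_le_univ _)]
  split_ifs with hab <;> simp [hab]

section

variable {α M R : Type*} [Fintype α] [DecidableEq α] [AddCommMonoid M] [CommRing R]

def quadSum (f : α → α → α → α → M) : M :=
  ∑ i, ∑ i', ∑ j, ∑ j', if i ≠ j ∧ i ≠ i' ∧ i' ≠ j' ∧ j ≠ j' then f i i' j j' else 0

lemma quadSum_add (f g : α → α → α → α → M) :
    quadSum (fun i i' j j' => f i i' j j' + g i i' j j') = quadSum f + quadSum g := by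
  simp only [quadSum, ite_add_zero, sum_add_distrib]

lemma quadSum_sub {G : Type*} [AddCommGroup G] (f g : α → α → α → α → G) :
    quadSum (fun i i' j j' => f i i' j j' - g i i' j j') = quadSum f - quadSum g := by
  rw [eq_sub_iff_add_eq, ← quadSum_add]
  simp only [sub_add_cancel]

lemma quadSum_const_mul (c : R) (f : α → α → α → α → R) :
    quadSum (fun i i' j j' => c * f i i' j j') = c * quadSum f := by
  simp only [quadSum, mul_sum, mul_ite, mul_zero]

lemma quadSum_comp_swap_middle (f : α → α → α → α → M) :
    quadSum (fun i i' j j' => f i j i' j') = quadSum f := by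
  refine sum_congr rfl fun _ _ => sum_comm.trans <| sum_congr rfl fun _ _ =>
    sum_congr rfl fun _ _ => sum_congr rfl fun _ _ => if_congr (by tauto) rfl rfl

lemma quadSum_comp_swap_primes (f : α → α → α → α → M) :
    quadSum (fun i i' j j' => f i' i j' j) = quadSum f := by
  refine sum_comm.trans <| sum_congr rfl fun _ _ => sum_congr rfl fun _ _ => sum_comm.trans <|
    sum_congr rfl fun _ _ => sum_congr rfl fun _ _ => if_congr (by tauto) rfl rfl

lemma quadSum_comp_swap_pairs (f : α → α → α → α → M) :
    quadSum (fun i i' j j' => f j j' i i') = quadSum f :=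
  (quadSum_comp_swap_middle fun i i' j j' => f i' j' i j).trans <|
    (quadSum_comp_swap_primes fun i i' j j' => f i j i' j').trans (quadSum_comp_swap_middle f)

lemma quadSum_adjacent (g : α → α → R) :
    quadSum (fun i i' _ _ => g i i') =
      ((Fintype.card α - 1) + (Fintype.card α - 2) ^ 2) * (∑ a, ∑ b, g a b - ∑ a, g a a) := by
  set n : R := (Fintype.card α : R) with hn
  have count : ∀ i i', ∑ j, ∑ j', (if i ≠ j ∧ i ≠ i' ∧ i' ≠ j' ∧ j ≠ j' then g i i' else 0) =
      ((n - 1) + (n - 2) ^ 2) * (g i i' - if i = i' then g i i' else 0) := by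
    intro i i'
    by_cases h : i = i'
    · simp [h]
    rw [if_neg h, sub_zero]
    calc _ = ∑ j, if j ≠ i then ∑ j', (if j' ≠ i' ∧ j' ≠ j then g i i' else 0) else 0 := by
          refine sum_congr rfl fun j _ => ?_
          split_ifs with hj
          · exact sum_congr rfl fun j' _ => if_congr (by tauto) rfl rfl
          · exact sum_eq_zero fun j' _ => if_neg (by tauto)
      _ = ∑ j, if j ≠ i then (n - 2) * g i i' + if i' = j then g i i' else 0 else 0 := by
          refine sum_congr rfl fun j _ => ?_
          rw [sum_ite_ne_and_ne, ← hn]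
          split_ifs <;> ring
      _ = _ := by
          rw [sum_ite_ne, if_neg (Ne.symm h)]
          simp only [sum_add_distrib, sum_const, card_univ, nsmul_eq_mul, ← hn, sum_ite_eq,
            mem_univ, if_true]
          ring
  simp only [quadSum, count, ← mul_sum, sum_sub_distrib, sum_ite_eq, mem_univ, if_true]

lemma quadSum_opposite (g : α → α → R) :
    quadSum (fun i _ _ j' => g i j') =
      (Fintype.card α - 2) ^ 2 * ∑ a, ∑ b, g a b + (2 * Fintype.card α - 3) * ∑ a, g a a := by
  set n : R := (Fintype.card α : R) with hn
  have count : ∀ i j', ∑ i', ∑ j, (if i ≠ j ∧ i ≠ i' ∧ i' ≠ j' ∧ j ≠ j' then g i j' else 0) =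
      ((n - 2) ^ 2 + if i = j' then 2 * n - 3 else 0) * g i j' := by
    intro i j'
    calc _ = ∑ i', ∑ j,
            (if i' ≠ i ∧ i' ≠ j' then 1 else 0) * (if j ≠ i ∧ j ≠ j' then g i j' else 0) := by
          refine sum_congr rfl fun i' _ => sum_congr rfl fun j _ => ?_
          split_ifs <;> grind
      _ = _ := by
          rw [← sum_mul_sum, sum_ite_ne_and_ne, sum_ite_ne_and_ne, ← hn]
          split_ifs <;> ring
  have reorder : quadSum (fun i _ _ j' => g i j') =
      ∑ i, ∑ j', ∑ i', ∑ j, if i ≠ j ∧ i ≠ i' ∧ i' ≠ j' ∧ j ≠ j' then g i j' else 0 :=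
    sum_congr rfl fun _ _ => (sum_congr rfl fun _ _ => sum_comm).trans sum_comm
  simp only [reorder, count, add_mul, sum_add_distrib, ← mul_sum, ite_mul, zero_mul, sum_ite_eq,
    mem_univ, if_true]

lemma quadSum_pair_variance {g : α → α → R} (hg : ∑ a, ∑ b, g a b = 0) :
    quadSum (fun i i' _ _ => g i i + g i' i' - 2 * g i i') =
      2 * Fintype.card α * ((Fintype.card α - 1) + (Fintype.card α - 2) ^ 2) * ∑ a, g a a := by
  rw [quadSum_adjacent]
  simp only [sum_add_distrib, sum_sub_distrib, ← mul_sum, hg, sum_const, card_univ, nsmul_eq_mul]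
  ring

lemma quadSum_contrast {g : α → α → R} (hg : ∑ a, ∑ b, g a b = 0) :
    quadSum (fun i i' j j' => g i j - g i j' - g i' j + g i' j') =
      -(2 * Fintype.card α * (Fintype.card α - 1)) * ∑ a, g a a := by
  have h_ij : quadSum (fun i _ j _ => g i j) = quadSum (fun i i' _ _ => g i i') :=
    quadSum_comp_swap_middle _
  have h_i'j' : quadSum (fun _ i' _ j' => g i' j') = quadSum (fun i _ j _ => g i j) :=
    quadSum_comp_swap_primes _
  have h_i'j : quadSum (fun _ i' j _ => g i' j) = quadSum (fun i _ _ j' => g i j') :=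
    quadSum_comp_swap_primes _
  rw [quadSum_add, quadSum_sub, quadSum_sub, h_i'j', h_ij, h_i'j, quadSum_adjacent,
    quadSum_opposite, hg]
  ring

theorem quadSum_variance {Ω Δ Θ : Matrix α α R} (hΩ : ∑ a, ∑ b, Ω a b = 0)
    (hΔ : ∑ a, ∑ b, Δ a b = 0) (hΘ : ∑ a, ∑ b, Θ a b = 0) :
    quadSum (fun i i' j j' => Ω i i + Ω i' i' - 2 * Ω i i' + Δ j j + Δ j' j' - 2 * Δ j j'
        + 2 * (Θ i j - Θ i j' - Θ i' j + Θ i' j')) =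
      2 * (Fintype.card α : R) * ((((Fintype.card α : R) - 1) + ((Fintype.card α : R) - 2) ^ 2)
        * (Ω.trace + Δ.trace) - 2 * ((Fintype.card α : R) - 1) * Θ.trace) := by
  have swapΔ : quadSum (fun _ _ j j' => Δ j j + Δ j' j' - 2 * Δ j j') =
      quadSum (fun i i' _ _ => Δ i i + Δ i' i' - 2 * Δ i i') :=
    quadSum_comp_swap_pairs _
  calc _ = quadSum (fun i i' _ _ => Ω i i + Ω i' i' - 2 * Ω i i')
          + quadSum (fun _ _ j j' => Δ j j + Δ j' j' - 2 * Δ j j')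
          + 2 * quadSum (fun i i' j j' => Θ i j - Θ i j' - Θ i' j + Θ i' j') := by
        rw [← quadSum_const_mul, ← quadSum_add, ← quadSum_add]
        congr 1
        funext
        ring
    _ = _ := by
        rw [swapΔ, quadSum_pair_variance hΩ, quadSum_pair_variance hΔ, quadSum_contrast hΘ]
        simp only [Matrix.trace, Matrix.diag_apply]
        ring

end

theorem variance_functional_identity_general
    (v : ℕ)
    (Ω Δ Θ : Matrix (Fin v) (Fin v) ℝ)
    (hΩr : ∀ i, ∑ j, Ω i j = 0)
    (hΔr : ∀ i, ∑ j, Δ i j = 0)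
    (hΘr : ∀ i, ∑ j, Θ i j = 0) :
    (∑ i : Fin v, ∑ i' : Fin v, ∑ j : Fin v, ∑ j' : Fin v,
      if i ≠ j ∧ i ≠ i' ∧ i' ≠ j' ∧ j ≠ j' then
        Ω i i + Ω i' i' - 2 * Ω i i' + Δ j j + Δ j' j' - 2 * Δ j j'
          + 2 * (Θ i j - Θ i j' - Θ i' j + Θ i' j')
      else 0) =
    2 * (v : ℝ) * ((((v : ℝ) - 1) + ((v : ℝ) - 2) ^ 2) * (Ω.trace + Δ.trace)
      - 2 * ((v : ℝ) - 1) * Θ.trace) := by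
  have total_zero (M : Matrix (Fin v) (Fin v) ℝ) (hM : ∀ i, ∑ j, M i j = 0) :
      ∑ i, ∑ j, M i j = 0 :=
    sum_eq_zero fun i _ => hM i
  have h := quadSum_variance (total_zero Ω hΩr) (total_zero Δ hΔr) (total_zero Θ hΘr)
  rwa [Fintype.card_fin] at h

/-- The variance functional identity (5.2): summing
`Q(i,i',j,j') = ω_{ii} + ω_{i'i'} - 2ω_{ii'} + δ_{jj} + δ_{j'j'} - 2δ_{jj'}
+ 2(θ_{ij} - θ_{ij'} - θ_{i'j} + θ_{i'j'})` over all quadruples with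
`i ≠ j, i ≠ i', i' ≠ j', j ≠ j'` gives
`2v[((v-1) + (v-2)²)(tr Ω + tr Δ) - 2(v-1) tr Θ]`, provided each of
`Ω, Δ, Θ` has all row and column sums zero. -/
theorem variance_functional_identity
    (v : ℕ) (hv : 1 ≤ v)
    (Ω Δ Θ : Matrix (Fin v) (Fin v) ℝ)
    (hΩr : ∀ i, ∑ j, Ω i j = 0) (hΩc : ∀ j, ∑ i, Ω i j = 0)
    (hΔr : ∀ i, ∑ j, Δ i j = 0) (hΔc : ∀ j, ∑ i, Δ i j = 0)
    (hΘr : ∀ i, ∑ j, Θ i j = 0) (hΘc : ∀ j, ∑ i, Θ i j = 0) :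
    (∑ i : Fin v, ∑ i' : Fin v, ∑ j : Fin v, ∑ j' : Fin v,
      if i ≠ j ∧ i ≠ i' ∧ i' ≠ j' ∧ j ≠ j' then
        Ω i i + Ω i' i' - 2 * Ω i i' + Δ j j + Δ j' j' - 2 * Δ j j'
          + 2 * (Θ i j - Θ i j' - Θ i' j + Θ i' j')
      else 0) =
    2 * (v : ℝ) * ((((v : ℝ) - 1) + ((v : ℝ) - 2) ^ 2) * (Ω.trace + Δ.trace)
      - 2 * ((v : ℝ) - 1) * Θ.trace) :=
  variance_functional_identity_general v Ω Δ Θ hΩr hΔr hΘr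
end

section
/- Let p, v be integers with 3 ≤ p ≤ v and let t ≥ 1 be a real number. Define c11 = 2pv(v−1)(2pv³ − 6pv² + 6pv − v³ + 2v − 3), c12 = c13 = −4pv(v−1)(v² − 2v + 2)/(t(p−1)), c21 = tv(p−1)(p²v − pv − p − v), c22 = −(2pv + v − 1), and c23 = −2(pv − 1). Then c11 > 0, c21 > 0, c21·c12 − c11·c22 > 0, and c21·c13 − c11·c23 > 0. -/
/-!
After cancelling the denominator `t(p - 1)` of `c12` against the factor `t(p - 1)` of `c21` and
removing the common positive factor `2pv(v - 1)`, each claim becomes the positivity of a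
polynomial in `p` and `v` on the region `3 ≤ p ≤ v`. Each of these follows from products of the
nonnegative quantities `p - 3`, `v - p`, `v - 3`, `p`, `v` and a few squares, so it holds for
real `p`, `v` as well.
-/

section

variable {R : Type*} [CommRing R] [LinearOrder R] [IsStrictOrderedRing R] {p v : R}

lemma c11_factor_pos (hp : 3 ≤ p) (hpv : p ≤ v) :
    0 < 2 * p * v ^ 3 - 6 * p * v ^ 2 + 6 * p * v - v ^ 3 + 2 * v - 3 := by
  have h3 : 0 ≤ p - 3 := by linarith
  nlinarith [mul_nonneg (mul_nonneg h3 (by linarith : (0 : R) ≤ v))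
      (by nlinarith : (0 : R) ≤ v ^ 2 - 3 * v + 3),
    sq_nonneg (v - 3), mul_pos (by linarith : (0 : R) < v) (by nlinarith : (0 : R) < v ^ 2 - 3 * v + 1)]

lemma c21_factor_pos (hp : 3 ≤ p) (hpv : p ≤ v) :
    0 < p ^ 2 * v - p * v - p - v := by
  have h5 : 5 ≤ p ^ 2 - p - 1 := by nlinarith
  nlinarith [mul_le_mul_of_nonneg_right h5 (by linarith : (0 : R) ≤ v)]

lemma x_coeff_factor_pos (hp : 3 ≤ p) (hpv : p ≤ v) :
    2 * v * (v ^ 2 - 2 * v + 2) * (p ^ 2 * v - p * v - p - v) <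
      (2 * p * v ^ 3 - 6 * p * v ^ 2 + 6 * p * v - v ^ 3 + 2 * v - 3) * (2 * p * v + v - 1) := by
  have h3 : 0 ≤ p - 3 := by linarith
  have hd : 0 ≤ v - p := by linarith
  have hv3 : 0 ≤ v - 3 := by linarith
  nlinarith [mul_nonneg h3 hd, sq_nonneg (v - p), sq_nonneg (p - 3), sq_nonneg (v - 3),
    mul_nonneg (mul_nonneg h3 hv3) (sq_nonneg v),
    mul_nonneg (mul_nonneg hd hv3) (mul_nonneg (by linarith : (0 : R) ≤ p) (by linarith : (0 : R) ≤ v)),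
    mul_pos (by linarith : (0 : R) < p) (by linarith : (0 : R) < v)]

lemma y_coeff_factor_pos (hp : 3 ≤ p) (hpv : p ≤ v) :
    v * (v ^ 2 - 2 * v + 2) * (p ^ 2 * v - p * v - p - v) <
      (2 * p * v ^ 3 - 6 * p * v ^ 2 + 6 * p * v - v ^ 3 + 2 * v - 3) * (p * v - 1) := by
  have h3 : 0 ≤ p - 3 := by linarith
  have hd : 0 ≤ v - p := by linarith
  have hv3 : 0 ≤ v - 3 := by linarith
  nlinarith [mul_nonneg h3 hd, sq_nonneg (v - p), sq_nonneg (p - 3), sq_nonneg (v - 3),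
    mul_nonneg (mul_nonneg h3 hv3) (sq_nonneg v),
    mul_nonneg (mul_nonneg hd hv3) (mul_nonneg (by linarith : (0 : R) ≤ p) (by linarith : (0 : R) ≤ v)),
    mul_pos (by linarith : (0 : R) < p) (by linarith : (0 : R) < v)]

end

/-- Positivity of the constants appearing in the functional `A(x,y)`. -/
theorem functional_constants_positive
    (p v : ℤ) (hp : 3 ≤ p) (hpv : p ≤ v) (t : ℝ) (ht : 1 ≤ t)
    (c11 c12 c13 c21 c22 c23 : ℝ)
    (hc11 : c11 = 2 * p * v * (v - 1) *
      (2 * p * v ^ 3 - 6 * p * v ^ 2 + 6 * p * v - v ^ 3 + 2 * v - 3))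
    (hc12 : c12 = -4 * p * v * (v - 1) * (v ^ 2 - 2 * v + 2) / (t * (p - 1)))
    (hc13 : c13 = c12)
    (hc21 : c21 = t * v * (p - 1) * (p ^ 2 * v - p * v - p - v))
    (hc22 : c22 = -(2 * p * v + v - 1))
    (hc23 : c23 = -2 * (p * v - 1)) :
    c11 > 0 ∧ c21 > 0 ∧ c21 * c12 - c11 * c22 > 0 ∧
      c21 * c13 - c11 * c23 > 0 := by
  have hp' : (3 : ℝ) ≤ p := by exact_mod_cast hp
  have hpv' : (p : ℝ) ≤ v := by exact_mod_cast hpv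
  have hcommon : 0 < 2 * (p : ℝ) * v * (v - 1) :=
    mul_pos (mul_pos (by linarith) (by linarith)) (by linarith)
  have hc21c12 : c21 * c12 = -4 * (p : ℝ) * v ^ 2 * (v - 1) * (v ^ 2 - 2 * v + 2) *
      (p ^ 2 * v - p * v - p - v) := by
    have ht0 : t ≠ 0 := by linarith
    have hp1 : (p : ℝ) - 1 ≠ 0 := by linarith
    rw [hc21, hc12]
    field_simp
  subst hc11 hc13 hc22 hc23
  refine ⟨mul_pos hcommon (c11_factor_pos hp' hpv'), ?_, ?_, ?_⟩
  · rw [hc21]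
    exact mul_pos (mul_pos (mul_pos (by linarith) (by linarith)) (by linarith))
      (c21_factor_pos hp' hpv')
  · linarith [mul_pos hcommon (sub_pos.2 (x_coeff_factor_pos hp' hpv'))]
  · linarith [mul_pos hcommon (sub_pos.2 (y_coeff_factor_pos hp' hpv'))]
end

section
/- Let p, v be integers with 3 ≤ p ≤ v, let t ≥ 1 be a real number, and let x ≥ 0, y ≥ 0 be real numbers with (x,y) ≠ (0,0). Define c11 = 2pv(v−1)(2pv³ − 6pv² + 6pv − v³ + 2v − 3), c12 = c13 = −4pv(v−1)(v² − 2v + 2)/(t(p−1)), c21 = tv(p−1)(p²v − pv − p − v), c22 = −(2pv + v − 1), c23 = −2(pv − 1), and suppose D := c21 + c22·x + c23·y − y²/(t(p−1)) > 0. Then (c11 + c12·x + c13·y)/D > c11/c21, i.e. A(x,y) > A(0,0). -/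
set_option maxHeartbeats 1600000

private lemma keyCX (P V : ℝ) (hP : 3 ≤ P) (hV : P ≤ V) :
    0 < -6 * P * V + 16 * P * V^2 - 22 * P * V^3 + 18 * P * V^4 - 8 * P * V^5 + 2 * P * V^6 + 16 * P^2 * V^2 - 48 * P^2 * V^3 + 52 * P^2 * V^4 - 24 * P^2 * V^5 + 4 * P^2 * V^6 - 16 * P^3 * V^3 + 32 * P^3 * V^4 - 20 * P^3 * V^5 + 4 * P^3 * V^6 := by
  obtain ⟨c, hc⟩ : ∃ c : ℝ, c ^ 2 = P - 3 := ⟨Real.sqrt (P - 3), Real.sq_sqrt (by linarith)⟩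
  obtain ⟨d, hd⟩ : ∃ d : ℝ, d ^ 2 = V - P := ⟨Real.sqrt (V - P), Real.sq_sqrt (by linarith)⟩
  have h1 : P = c ^ 2 + 3 := by linarith
  have h2 : V = d ^ 2 + c ^ 2 + 3 := by linarith
  have hE : (0 : ℝ) < 8640 + 28512 * d^2 + 38316 * d^4 + 26502 * d^6 + 9936 * d^8 + 1920 * d^10 + 150 * d^12 + 35712 * c^2 + 101328 * c^2 * d^2 + 113386 * c^2 * d^4 + 63410 * c^2 * d^6 + 18504 * c^2 * d^8 + 2620 * c^2 * d^10 + 134 * c^2 * d^12 + 65100 * c^4 + 154598 * c^4 * d^2 + 140782 * c^4 * d^4 + 61944 * c^4 * d^6 + 13530 * c^4 * d^8 + 1320 * c^4 * d^10 + 40 * c^4 * d^12 + 67930 * c^6 + 131834 * c^6 * d^2 + 95052 * c^6 * d^4 + 31648 * c^6 * d^6 + 4862 * c^6 * d^8 + 292 * c^6 * d^10 + 4 * c^6 * d^12 + 44526 * c^8 + 68688 * c^8 * d^2 + 37714 * c^8 * d^4 + 8928 * c^8 * d^6 + 860 * c^8 * d^8 + 24 * c^8 * d^10 + 18996 * c^10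 + 22404 * c^10 * d^2 + 8802 * c^10 * d^4 + 1320 * c^10 * d^6 + 60 * c^10 * d^8 + 5278 * c^12 + 4472 * c^12 * d^2 + 1120 * c^12 * d^4 + 80 * c^12 * d^6 + 922 * c^14 + 500 * c^14 * d^2 + 60 * c^14 * d^4 + 92 * c^16 + 24 * c^16 * d^2 + 4 * c^18 := by positivity
  have hId : (-6 * P * V + 16 * P * V^2 - 22 * P * V^3 + 18 * P * V^4 - 8 * P * V^5 + 2 * P * V^6 + 16 * P^2 * V^2 - 48 * P^2 * V^3 + 52 * P^2 * V^4 - 24 * P^2 * V^5 + 4 * P^2 * V^6 - 16 * P^3 * V^3 + 32 * P^3 * V^4 - 20 * P^3 * V^5 + 4 * P^3 * V^6)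
      = 8640 + 28512 * d^2 + 38316 * d^4 + 26502 * d^6 + 9936 * d^8 + 1920 * d^10 + 150 * d^12 + 35712 * c^2 + 101328 * c^2 * d^2 + 113386 * c^2 * d^4 + 63410 * c^2 * d^6 + 18504 * c^2 * d^8 + 2620 * c^2 * d^10 + 134 * c^2 * d^12 + 65100 * c^4 + 154598 * c^4 * d^2 + 140782 * c^4 * d^4 + 61944 * c^4 * d^6 + 13530 * c^4 * d^8 + 1320 * c^4 * d^10 + 40 * c^4 * d^12 + 67930 * c^6 + 131834 * c^6 * d^2 + 95052 * c^6 * d^4 + 31648 * c^6 * d^6 + 4862 * c^6 * d^8 + 292 * c^6 * d^10 + 4 * c^6 * d^12 + 44526 * c^8 + 68688 * c^8 * d^2 + 37714 * c^8 * d^4 + 8928 * c^8 * d^6 + 860 * c^8 * d^8 + 24 * c^8 * d^10 + 18996 * c^10 + 22404 * c^10 * d^2 + 8802 * c^10 * d^4 + 1320 * c^10 * d^6 + 60 * c^10 * d^8 + 5278 * c^12 + 4472 * c^12 * d^2 + 1120 * c^12 * d^4 + 80 * c^12 * d^6 + 922 * c^14 + 500 * c^14 * d^2 + 60 * c^14 *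 d^4 + 92 * c^16 + 24 * c^16 * d^2 + 4 * c^18 := by rw [h1, h2]; ring
  linarith [hE, hId]

private lemma keyCY (P V : ℝ) (hP : 3 ≤ P) (hV : P ≤ V) :
    0 < -12 * P * V + 20 * P * V^2 - 16 * P * V^3 + 12 * P * V^4 - 8 * P * V^5 + 4 * P * V^6 + 28 * P^2 * V^2 - 60 * P^2 * V^3 + 44 * P^2 * V^4 - 12 * P^2 * V^5 - 16 * P^3 * V^3 + 32 * P^3 * V^4 - 20 * P^3 * V^5 + 4 * P^3 * V^6 := by
  obtain ⟨c, hc⟩ : ∃ c : ℝ, c ^ 2 = P - 3 := ⟨Real.sqrt (P - 3), Real.sq_sqrt (by linarith)⟩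
  obtain ⟨d, hd⟩ : ∃ d : ℝ, d ^ 2 = V - P := ⟨Real.sqrt (V - P), Real.sq_sqrt (by linarith)⟩
  have h1 : P = c ^ 2 + 3 := by linarith
  have h2 : V = d ^ 2 + c ^ 2 + 3 := by linarith
  have hE : (0 : ℝ) < 4320 + 17064 * d^2 + 25476 * d^4 + 18852 * d^6 + 7416 * d^8 + 1488 * d^10 + 120 * d^12 + 20232 * c^2 + 65568 * c^2 * d^2 + 79712 * c^2 * d^4 + 47216 * c^2 * d^6 + 14400 * c^2 * d^8 + 2116 * c^2 * d^10 + 112 * c^2 * d^12 + 41316 * c^4 + 108112 * c^4 * d^2 + 105172 * c^4 * d^4 + 48660 * c^4 * d^6 + 11092 * c^4 * d^8 + 1128 * c^4 * d^10 + 36 * c^4 * d^12 + 47468 * c^6 + 99116 * c^6 * d^2 + 75504 * c^6 * d^4 + 26336 * c^6 * d^6 + 4232 * c^6 * d^8 + 268 * c^6 * d^10 + 4 * c^6 * d^12 + 33744 * c^8 + 55188 * c^8 * d^2 + 31816 * c^8 * d^4 + 7888 * c^8 * d^6 + 800 * c^8 * d^8 + 24 * c^8 * d^10 + 15432 * c^10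 + 19132 * c^10 * d^2 + 7872 * c^10 * d^4 + 1240 * c^10 * d^6 + 60 * c^10 * d^8 + 4556 * c^12 + 4040 * c^12 * d^2 + 1060 * c^12 * d^4 + 80 * c^12 * d^6 + 840 * c^14 + 476 * c^14 * d^2 + 60 * c^14 * d^4 + 88 * c^16 + 24 * c^16 * d^2 + 4 * c^18 := by positivity
  have hId : (-12 * P * V + 20 * P * V^2 - 16 * P * V^3 + 12 * P * V^4 - 8 * P * V^5 + 4 * P * V^6 + 28 * P^2 * V^2 - 60 * P^2 * V^3 + 44 * P^2 * V^4 - 12 * P^2 * V^5 - 16 * P^3 * V^3 + 32 * P^3 * V^4 - 20 * P^3 * V^5 + 4 * P^3 * V^6)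
      = 4320 + 17064 * d^2 + 25476 * d^4 + 18852 * d^6 + 7416 * d^8 + 1488 * d^10 + 120 * d^12 + 20232 * c^2 + 65568 * c^2 * d^2 + 79712 * c^2 * d^4 + 47216 * c^2 * d^6 + 14400 * c^2 * d^8 + 2116 * c^2 * d^10 + 112 * c^2 * d^12 + 41316 * c^4 + 108112 * c^4 * d^2 + 105172 * c^4 * d^4 + 48660 * c^4 * d^6 + 11092 * c^4 * d^8 + 1128 * c^4 * d^10 + 36 * c^4 * d^12 + 47468 * c^6 + 99116 * c^6 * d^2 + 75504 * c^6 * d^4 + 26336 * c^6 * d^6 + 4232 * c^6 * d^8 + 268 * c^6 * d^10 + 4 * c^6 * d^12 + 33744 * c^8 + 55188 * c^8 * d^2 + 31816 * c^8 * d^4 + 7888 * c^8 * d^6 + 800 * c^8 * d^8 + 24 * c^8 * d^10 + 15432 * c^10 + 19132 * c^10 * d^2 + 7872 * c^10 * d^4 + 1240 * c^10 * d^6 + 60 * c^10 * d^8 + 4556 * c^12 + 4040 * c^12 * d^2 + 1060 * c^12 * d^4 + 80 * c^12 * d^6 + 840 * c^14 + 476 * c^14 * d^2 + 60 * c^14 *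 d^4 + 88 * c^16 + 24 * c^16 * d^2 + 4 * c^18 := by rw [h1, h2]; ring
  linarith [hE, hId]

private lemma keyC11 (P V : ℝ) (hP : 3 ≤ P) (hV : P ≤ V) :
    0 < 2 * P * V * (V - 1) * (2 * P * V^3 - 6 * P * V^2 + 6 * P * V - V^3 + 2 * V - 3) := by
  obtain ⟨c, hc⟩ : ∃ c : ℝ, c ^ 2 = P - 3 := ⟨Real.sqrt (P - 3), Real.sq_sqrt (by linarith)⟩
  obtain ⟨d, hd⟩ : ∃ d : ℝ, d ^ 2 = V - P := ⟨Real.sqrt (V - P), Real.sq_sqrt (by linarith)⟩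
  have h1 : P = c ^ 2 + 3 := by linarith
  have h2 : V = d ^ 2 + c ^ 2 + 3 := by linarith
  have hE : (0 : ℝ) < 1080 + 2592 * d^2 + 2562 * d^4 + 1272 * d^6 + 312 * d^8 + 30 * d^10 + 3600 * c^2 + 7392 * c^2 * d^2 + 5930 * c^2 * d^4 + 2248 * c^2 * d^6 + 386 * c^2 * d^8 + 22 * c^2 * d^10 + 5046 * c^4 + 8512 * c^4 * d^2 + 5292 * c^4 * d^4 + 1436 * c^4 * d^6 + 154 * c^4 * d^8 + 4 * c^4 * d^10 + 3854 * c^6 + 5088 * c^6 * d^2 + 2292 * c^6 * d^4 + 396 * c^6 * d^6 + 20 * c^6 * d^8 + 1732 * c^8 + 1670 * c^8 * d^2 + 484 * c^8 * d^4 + 40 * c^8 * d^6 + 458 * c^10 + 286 * c^10 * d^2 + 40 * c^10 * d^4 + 66 * c^12 + 20 * c^12 * d^2 + 4 * c^14 := by positivity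
  have hId : (2 * P * V * (V - 1) * (2 * P * V^3 - 6 * P * V^2 + 6 * P * V - V^3 + 2 * V - 3))
      = 1080 + 2592 * d^2 + 2562 * d^4 + 1272 * d^6 + 312 * d^8 + 30 * d^10 + 3600 * c^2 + 7392 * c^2 * d^2 + 5930 * c^2 * d^4 + 2248 * c^2 * d^6 + 386 * c^2 * d^8 + 22 * c^2 * d^10 + 5046 * c^4 + 8512 * c^4 * d^2 + 5292 * c^4 * d^4 + 1436 * c^4 * d^6 + 154 * c^4 * d^8 + 4 * c^4 * d^10 + 3854 * c^6 + 5088 * c^6 * d^2 + 2292 * c^6 * d^4 + 396 * c^6 * d^6 + 20 * c^6 * d^8 + 1732 * c^8 + 1670 * c^8 * d^2 + 484 * c^8 * d^4 + 40 * c^8 * d^6 + 458 * c^10 + 286 * c^10 * d^2 + 40 * c^10 * d^4 + 66 * c^12 + 20 * c^12 * d^2 + 4 * c^14 := by rw [h1, h2]; ring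
  linarith [hE, hId]

/-- `A(x,y) > A(0,0)` for `(x,y) ≠ (0,0)` with `x, y ≥ 0`, where `A` is the
functional of Section 5 measuring the sum of variances of all contrasts
`τ_i + δ_j - τ_{i'} - δ_{j'}`. -/
theorem functional_A_minimized_at_origin
    (p v : ℤ) (hp : 3 ≤ p) (hpv : p ≤ v) (t : ℝ) (ht : 1 ≤ t)
    (x y : ℝ) (hx : 0 ≤ x) (hy : 0 ≤ y) (hxy : (x, y) ≠ (0, 0))
    (c11 c12 c13 c21 c22 c23 : ℝ)
    (hc11 : c11 = 2 * p * v * (v - 1) *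
      (2 * p * v ^ 3 - 6 * p * v ^ 2 + 6 * p * v - v ^ 3 + 2 * v - 3))
    (hc12 : c12 = -4 * p * v * (v - 1) * (v ^ 2 - 2 * v + 2) / (t * (p - 1)))
    (hc13 : c13 = c12)
    (hc21 : c21 = t * v * (p - 1) * (p ^ 2 * v - p * v - p - v))
    (hc22 : c22 = -(2 * p * v + v - 1))
    (hc23 : c23 = -2 * (p * v - 1))
    (D : ℝ) (hD : D = c21 + c22 * x + c23 * y - y ^ 2 / (t * (p - 1)))
    (hDpos : D > 0) :
    (c11 + c12 * x + c13 * y) / D > c11 / c21 := by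
  have hP : (3 : ℝ) ≤ (p : ℝ) := by exact_mod_cast hp
  have hV : ((p : ℝ)) ≤ ((v : ℝ)) := by exact_mod_cast hpv
  set P : ℝ := ((p : ℝ)) with hPdef
  set V : ℝ := ((v : ℝ)) with hVdef
  clear_value P V
  clear hPdef hVdef hp hpv
  have ht0 : (0 : ℝ) < t := by linarith
  have hK : (0 : ℝ) < t * (P - 1) := by nlinarith
  have hcx := keyCX P V hP hV
  have hcy := keyCY P V hP hV
  have hc11pos := keyC11 P V hP hV
  have hc21pos : 0 < c21 := by
    rw [hc21]
    have h1 : 0 < P ^ 2 * V - P * V - P - V := by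
      nlinarith [mul_nonneg (by linarith : (0:ℝ) ≤ V - P) (by nlinarith : (0:ℝ) ≤ P ^ 2 - P - 1)]
    have h2 : (0:ℝ) < V := by linarith
    exact mul_pos (mul_pos (mul_pos ht0 h2) (by linarith : (0:ℝ) < P - 1)) h1
  rw [gt_iff_lt, div_lt_div_iff₀ hc21pos hDpos]
  subst hc13 hc11 hc12 hc21 hc22 hc23 hD
  have key : (2 * P * V * (V - 1) *
        (2 * P * V ^ 3 - 6 * P * V ^ 2 + 6 * P * V - V ^ 3 + 2 * V - 3)
        + -4 * P * V * (V - 1) * (V ^ 2 - 2 * V + 2) / (t * (P - 1)) * x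
        + -4 * P * V * (V - 1) * (V ^ 2 - 2 * V + 2) / (t * (P - 1)) * y) *
        (t * V * (P - 1) * (P ^ 2 * V - P * V - P - V))
      - 2 * P * V * (V - 1) *
        (2 * P * V ^ 3 - 6 * P * V ^ 2 + 6 * P * V - V ^ 3 + 2 * V - 3) *
        (t * V * (P - 1) * (P ^ 2 * V - P * V - P - V) + -(2 * P * V + V - 1) * x
          + -2 * (P * V - 1) * y - y ^ 2 / (t * (P - 1)))
      = (-6 * P * V + 16 * P * V^2 - 22 * P * V^3 + 18 * P * V^4 - 8 * P * V^5 + 2 * P * V^6 + 16 * P^2 * V^2 - 48 * P^2 * V^3 + 52 * P^2 * V^4 - 24 * P^2 * V^5 + 4 * P^2 * V^6 - 16 * P^3 * V^3 + 32 * P^3 * V^4 - 20 * P^3 * V^5 + 4 * P^3 * V^6) * x + (-12 * P * V + 20 * P * V^2 - 16 * P * V^3 + 12 * P * V^4 - 8 * P * V^5 + 4 * P * V^6 + 28 * P^2 * V^2 - 60 * P^2 * V^3 + 44 * P^2 * V^4 - 12 * P^2 * V^5 - 16 * P^3 * V^3 + 32 * P^3 * V^4 - 20 * P^3 * V^5 +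 4 * P^3 * V^6) * y
        + 2 * P * V * (V - 1) *
          (2 * P * V ^ 3 - 6 * P * V ^ 2 + 6 * P * V - V ^ 3 + 2 * V - 3) * y ^ 2 / (t * (P - 1)) := by
    have hP1 : P - 1 ≠ 0 := by linarith
    have ht1 : t ≠ 0 := ht0.ne'
    field_simp
    ring
  have hx' : 0 ≤ (-6 * P * V + 16 * P * V^2 - 22 * P * V^3 + 18 * P * V^4 - 8 * P * V^5 + 2 * P * V^6 + 16 * P^2 * V^2 - 48 * P^2 * V^3 + 52 * P^2 * V^4 - 24 * P^2 * V^5 + 4 * P^2 * V^6 - 16 * P^3 * V^3 + 32 * P^3 * V^4 - 20 * P^3 * V^5 + 4 * P^3 * V^6) * x := mul_nonneg hcx.le hx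
  have hy' : 0 ≤ (-12 * P * V + 20 * P * V^2 - 16 * P * V^3 + 12 * P * V^4 - 8 * P * V^5 + 4 * P * V^6 + 28 * P^2 * V^2 - 60 * P^2 * V^3 + 44 * P^2 * V^4 - 12 * P^2 * V^5 - 16 * P^3 * V^3 + 32 * P^3 * V^4 - 20 * P^3 * V^5 + 4 * P^3 * V^6) * y := mul_nonneg hcy.le hy
  have hq : 0 ≤ 2 * P * V * (V - 1) *
      (2 * P * V ^ 3 - 6 * P * V ^ 2 + 6 * P * V - V ^ 3 + 2 * V - 3) * y ^ 2 / (t * (P - 1)) :=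
    div_nonneg (mul_nonneg hc11pos.le (sq_nonneg y)) hK.le
  have hpos : x > 0 ∨ y > 0 := by
    rcases lt_or_eq_of_le hx with h | h
    · exact Or.inl h
    · rcases lt_or_eq_of_le hy with h' | h'
      · exact Or.inr h'
      · exact absurd (by rw [← h, ← h']) hxy
  rcases hpos with h | h
  · linarith [mul_pos hcx h, key]
  · linarith [mul_pos hcy h, key]
end
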